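/- Let g:[0,1]→[0,1] be piecewise C² with respect to a mesh 0=z₀<z₁<⋯<z_{n+1}=1 (the restriction of g to each (z_i,z_{i+1}) extends to a C² function on [z_i,z_{i+1}]) and uniformly expanding: |g'|≥η>1 on each piece. For a refinement {w_{j,i}} of this mesh with maximal step θ, let 𝔏_θ:[0,1]→[0,1] be the piecewise linear interpolant of g. Then there exists a constant c>0, depending only on g, such that for all sufficiently small θ there exist a Borel set B_θ⊆[0,1] with Lebesgue measure m(B_θ)>1−c·√θ and a C¹ diffeomorphism d_θ:[0,1]→[0,1] such that g(x)=𝔏_θ(d_θ(x)) for all x∈B_θ, |d_θ(x)−x|<c·√θ for all x∈[0,1], and |1/d_θ'(x)−1|<c·√θ for all x∈[0,1]. In particular 𝔡(g,𝔏_θ)≤c·√θ, where 𝔡 is Keller's distance on piecewise expanding maps. -/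

import Mathlib

/-!
On a mesh cell `[a, b]` inside one branch `G` of `g`, the linear interpolant is the secant line of
`G`, so `𝔏 ∘ σ = G` for `σ = (secant line)⁻¹ ∘ G`. By the mean value theorem `σ' = G' / slope` is
within `K (b - a) ≤ K θ` of `1`, where `K` is a Lipschitz constant of the `G'`. The maps `σ` do not
fit together to a `C¹` map at the knots, so each is blended into the identity by a smooth plateau
of width `√θ (b - a)` at both ends of its cell: `d = id + ∑ plateau · (σ - id)` is `C¹` as a finite
sum, and the blending costs only `|plateau'| · |σ - id| ≲ K θ (b - a) / (√θ (b - a)) = K √θ` in the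
derivative. Off the blending zones, whose total length is `2 √θ`, `d = σ` and so `g = 𝔏 ∘ d`.
-/

open MeasureTheory Filter Topology Set Function

noncomputable section

namespace Stmt14

def kellerDist (g g' : ℝ → ℝ) : ℝ :=
  sInf {ε : ℝ | 0 < ε ∧
    ∃ B : Set ℝ, MeasurableSet B ∧ B ⊆ Set.Icc 0 1 ∧
      (volume B).toReal > 1 - ε ∧
      ∃ d : ℝ → ℝ, ContDiffOn ℝ 1 d (Set.Icc 0 1) ∧ StrictMonoOn d (Set.Icc 0 1) ∧
        d '' Set.Icc 0 1 = Set.Icc 0 1 ∧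
        (∀ x ∈ B, g x = g' (d x)) ∧
        (∀ x ∈ Set.Icc (0:ℝ) 1, |d x - x| < ε) ∧
        (∀ x ∈ Set.Icc (0:ℝ) 1, |1 / derivWithin d (Set.Icc 0 1) x - 1| < ε)}

open Real
open scoped NNReal

lemma deriv_smoothTransition_eq_zero_of_nonpos {t : ℝ} (ht : t ≤ 0) :
    deriv smoothTransition t = 0 :=
  IsLocalMin.deriv_eq_zero <| .of_forall fun s => by
    rw [smoothTransition.zero_of_nonpos ht]; exact smoothTransition.nonneg s

lemma deriv_smoothTransition_eq_zero_of_one_le {t : ℝ} (ht : 1 ≤ t) :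
    deriv smoothTransition t = 0 :=
  IsLocalMax.deriv_eq_zero <| .of_forall fun s => by
    rw [smoothTransition.one_of_one_le ht]; exact smoothTransition.le_one s

lemma exists_abs_deriv_smoothTransition_le : ∃ C, ∀ t, |deriv smoothTransition t| ≤ C := by
  have hsupp : HasCompactSupport (deriv smoothTransition) := by
    refine .intro (isCompact_Icc (a := 0) (b := 1)) fun t ht => ?_
    rcases not_and_or.1 ht with h | h
    · exact deriv_smoothTransition_eq_zero_of_nonpos (not_le.1 h).le
    · exact deriv_smoothTransition_eq_zero_of_one_le (not_le.1 h).le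
  simpa only [Real.norm_eq_abs] using
    (smoothTransition.contDiff (n := 1).continuous_deriv le_rfl).bounded_above_of_compact_support
      hsupp

def plateau (a b δ x : ℝ) : ℝ :=
  smoothTransition ((x - a) / δ) * smoothTransition ((b - x) / δ)

section plateau

variable {a b δ x : ℝ}

lemma plateau_nonneg : 0 ≤ plateau a b δ x :=
  mul_nonneg (smoothTransition.nonneg _) (smoothTransition.nonneg _)

lemma plateau_le_one : plateau a b δ x ≤ 1 :=
  mul_le_one₀ (smoothTransition.le_one _) (smoothTransition.nonneg _) (smoothTransition.le_one _)

lemma plateau_eq_zero (hδ : 0 < δ) (hx : x ≤ a ∨ b ≤ x) : plateau a b δ x = 0 := by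
  rcases hx with hx | hx
  · rw [plateau, smoothTransition.zero_of_nonpos (div_nonpos_of_nonpos_of_nonneg (by linarith)
      hδ.le), zero_mul]
  · rw [plateau, smoothTransition.zero_of_nonpos (x := (b - x) / δ)
      (div_nonpos_of_nonpos_of_nonneg (by linarith) hδ.le), mul_zero]

lemma plateau_eq_one (hδ : 0 < δ) (ha : a + δ ≤ x) (hb : x ≤ b - δ) : plateau a b δ x = 1 := by
  rw [plateau, smoothTransition.one_of_one_le, smoothTransition.one_of_one_le, mul_one]
  all_goals rw [one_le_div hδ]; linarith

lemma contDiff_plateau : ContDiff ℝ 1 (plateau a b δ) :=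
  (smoothTransition.contDiff.comp (by fun_prop)).mul (smoothTransition.contDiff.comp (by fun_prop))

lemma deriv_plateau_eq_zero (hδ : 0 < δ) (hx : x ≤ a ∨ b ≤ x) : deriv (plateau a b δ) x = 0 :=
  IsLocalMin.deriv_eq_zero <| .of_forall fun _ => by
    rw [plateau_eq_zero hδ hx]; exact plateau_nonneg

lemma abs_deriv_plateau_le (hδ : 0 < δ) {C : ℝ} (hC : ∀ t, |deriv smoothTransition t| ≤ C) :
    |deriv (plateau a b δ) x| ≤ 2 * C / δ := by
  have hst (t : ℝ) : HasDerivAt smoothTransition (deriv smoothTransition t) t :=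
    (smoothTransition.contDiff (n := 1).differentiable one_ne_zero t).hasDerivAt
  have hl := (hst ((x - a) / δ)).comp x (((hasDerivAt_id x).sub_const a).div_const δ)
  have hr := (hst ((b - x) / δ)).comp x (((hasDerivAt_id x).const_sub b).div_const δ)
  have hprod : HasDerivAt (plateau a b δ) _ x := hl.mul hr
  rw [hprod.deriv]
  have hC0 : 0 ≤ C / δ := div_nonneg ((abs_nonneg _).trans (hC 0)) hδ.le
  have hd (s e : ℝ) (he : |e| = 1 / δ) : |deriv smoothTransition s * e| ≤ C / δ := by
    rw [abs_mul, he, ← div_eq_mul_one_div]; exact div_le_div_of_nonneg_right (hC s) hδ.le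
  have hs (u : ℝ) : |smoothTransition u| ≤ 1 :=
    abs_le.2 ⟨by linarith [smoothTransition.nonneg u], smoothTransition.le_one u⟩
  calc _ ≤ C / δ * 1 + 1 * (C / δ) := by
        refine (abs_add_le _ _).trans (add_le_add ?_ ?_) <;> rw [abs_mul]
        · exact mul_le_mul (hd _ _ (by simp [abs_of_pos hδ])) (hs _) (abs_nonneg _) hC0
        · exact mul_le_mul (hs _) (hd _ _ (by simp [abs_div, abs_of_pos hδ])) (abs_nonneg _)
            zero_le_one
    _ = 2 * C / δ := by ring

end plateau

def secantInv (G : ℝ → ℝ) (a b x : ℝ) : ℝ := a + (G x - G a) / slope G a b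

section secantInv

variable {G : ℝ → ℝ} {a b x : ℝ}

lemma secantInv_left : secantInv G a b a = a := by simp [secantInv]

lemma secantInv_right (hS : slope G a b ≠ 0) : secantInv G a b b = b := by
  rw [slope_def_field] at hS
  rw [secantInv, slope_def_field]
  field_simp [(div_ne_zero_iff.1 hS).1, (div_ne_zero_iff.1 hS).2]
  ring

lemma hasDerivAt_secantInv (hG : DifferentiableAt ℝ G x) :
    HasDerivAt (secantInv G a b) (deriv G x / slope G a b) x :=
  ((hG.hasDerivAt.sub_const (G a)).div_const _).const_add a

lemma interp_secantInv (hS : slope G a b ≠ 0) :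
    ((b - secantInv G a b x) * G a + (secantInv G a b x - a) * G b) / (b - a) = G x := by
  rw [slope_def_field] at hS
  rw [secantInv, slope_def_field]
  field_simp [(div_ne_zero_iff.1 hS).1, (div_ne_zero_iff.1 hS).2]
  ring

end secantInv

structure ExpandingPiece (G : ℝ → ℝ) (K : ℝ≥0) (a b : ℝ) : Prop where
  contDiff : ContDiff ℝ 1 G
  one_le_abs_deriv : ∀ x ∈ Ioo a b, 1 ≤ |deriv G x|
  lipschitzOnWith : LipschitzOnWith K (deriv G) (Icc a b)

namespace ExpandingPiece

variable {G : ℝ → ℝ} {K : ℝ≥0} {a b x : ℝ}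

lemma mono (hG : ExpandingPiece G K a b) {a' b' : ℝ} (ha : a ≤ a') (hb : b' ≤ b) :
    ExpandingPiece G K a' b' where
  contDiff := hG.contDiff
  one_le_abs_deriv x hx := hG.one_le_abs_deriv x (Ioo_subset_Ioo ha hb hx)
  lipschitzOnWith := hG.lipschitzOnWith.mono (Icc_subset_Icc ha hb)

lemma differentiable (hG : ExpandingPiece G K a b) : Differentiable ℝ G :=
  hG.contDiff.differentiable one_ne_zero

lemma exists_deriv_eq_slope (hG : ExpandingPiece G K a b) (hab : a < b) :
    ∃ ξ ∈ Ioo a b, deriv G ξ = slope G a b := by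
  rw [slope_def_field]
  exact _root_.exists_deriv_eq_slope G hab hG.contDiff.continuous.continuousOn
    hG.differentiable.differentiableOn

lemma one_le_abs_slope (hG : ExpandingPiece G K a b) (hab : a < b) : 1 ≤ |slope G a b| := by
  obtain ⟨ξ, hξ, hξS⟩ := hG.exists_deriv_eq_slope hab
  exact hξS ▸ hG.one_le_abs_deriv ξ hξ

lemma slope_ne_zero (hG : ExpandingPiece G K a b) (hab : a < b) : slope G a b ≠ 0 := by
  intro h; have := hG.one_le_abs_slope hab; rw [h, abs_zero] at this; linarith

lemma abs_deriv_sub_slope_le (hG : ExpandingPiece G K a b) (hab : a < b) (hx : x ∈ Icc a b) :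
    |deriv G x - slope G a b| ≤ K * (b - a) := by
  obtain ⟨ξ, hξ, hξS⟩ := hG.exists_deriv_eq_slope hab
  have hlip := hG.lipschitzOnWith.dist_le_mul x hx ξ (Ioo_subset_Icc_self hξ)
  rw [Real.dist_eq, Real.dist_eq, hξS] at hlip
  refine hlip.trans (mul_le_mul_of_nonneg_left ?_ K.2)
  rw [abs_sub_le_iff]; constructor <;> linarith [hx.1, hx.2, hξ.1, hξ.2]

lemma abs_deriv_div_slope_sub_one_le (hG : ExpandingPiece G K a b) (hab : a < b)
    (hx : x ∈ Icc a b) : |deriv G x / slope G a b - 1| ≤ K * (b - a) := by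
  have hS := hG.one_le_abs_slope hab
  rw [div_sub_one (hG.slope_ne_zero hab), abs_div]
  exact (div_le_self (abs_nonneg _) hS).trans (hG.abs_deriv_sub_slope_le hab hx)

lemma abs_secantInv_sub_le (hG : ExpandingPiece G K a b) (hab : a < b) (hx : x ∈ Icc a b) :
    |secantInv G a b x - x| ≤ K * (b - a) * (b - a) := by
  have hderiv : ∀ y ∈ Icc a b, HasDerivWithinAt (fun y => secantInv G a b y - y)
      (deriv G y / slope G a b - 1) (Icc a b) y := fun y _ =>
    ((hasDerivAt_secantInv (hG.differentiable y)).sub (hasDerivAt_id y)).hasDerivWithinAt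
  have := (convex_Icc a b).norm_image_sub_le_of_norm_hasDerivWithin_le hderiv
    (fun y hy => hG.abs_deriv_div_slope_sub_one_le hab hy) (left_mem_Icc.2 hab.le) hx
  simp only [secantInv_left, sub_self, sub_zero, Real.norm_eq_abs] at this
  refine this.trans (mul_le_mul_of_nonneg_left ?_ (by positivity))
  rw [abs_of_nonneg (by linarith [hx.1])]; linarith [hx.2]

lemma secantInv_mem_Ico (hG : ExpandingPiece G K a b) (hab : a < b) (hK : K * (b - a) < 1)
    (hx : x ∈ Ioo a b) : secantInv G a b x ∈ Ico a b := by
  have hmono : StrictMonoOn (secantInv G a b) (Icc a b) := by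
    refine strictMonoOn_of_deriv_pos (convex_Icc a b) (fun y _ =>
      (hasDerivAt_secantInv (hG.differentiable y)).continuousAt.continuousWithinAt) fun y hy => ?_
    rw [interior_Icc] at hy
    rw [(hasDerivAt_secantInv (hG.differentiable y)).deriv]
    have := (abs_le.1 (hG.abs_deriv_div_slope_sub_one_le hab (Ioo_subset_Icc_self hy))).1
    linarith
  have hxI := Ioo_subset_Icc_self hx
  have hleft := hmono (left_mem_Icc.2 hab.le) hxI hx.1
  have hright := hmono hxI (right_mem_Icc.2 hab.le) hx.2
  rw [secantInv_left] at hleft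
  rw [secantInv_right (hG.slope_ne_zero hab)] at hright
  exact ⟨hleft.le, hright⟩

end ExpandingPiece

def secantCorrection (G : ℝ → ℝ) (a b δ x : ℝ) : ℝ := plateau a b δ x * (secantInv G a b x - x)

section secantCorrection

variable {G : ℝ → ℝ} {a b δ x : ℝ}

lemma contDiff_secantCorrection (hG : ContDiff ℝ 1 G) : ContDiff ℝ 1 (secantCorrection G a b δ) :=
  contDiff_plateau.mul ((contDiff_const.add ((hG.sub contDiff_const).div_const _)).sub contDiff_id)

lemma secantCorrection_eq_zero (hδ : 0 < δ) (hx : x ≤ a ∨ b ≤ x) :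
    secantCorrection G a b δ x = 0 := by
  rw [secantCorrection, plateau_eq_zero hδ hx, zero_mul]

lemma secantCorrection_eq (hδ : 0 < δ) (ha : a + δ ≤ x) (hb : x ≤ b - δ) :
    secantCorrection G a b δ x = secantInv G a b x - x := by
  rw [secantCorrection, plateau_eq_one hδ ha hb, one_mul]

lemma hasDerivAt_secantCorrection (hG : DifferentiableAt ℝ G x) :
    HasDerivAt (secantCorrection G a b δ) (deriv (plateau a b δ) x * (secantInv G a b x - x) +
      plateau a b δ x * (deriv G x / slope G a b - 1)) x :=
  (contDiff_plateau.differentiable one_ne_zero x).hasDerivAt.mul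
    ((hasDerivAt_secantInv hG).sub (hasDerivAt_id x))

lemma deriv_secantCorrection_eq_zero (hG : DifferentiableAt ℝ G x) (hδ : 0 < δ)
    (hx : x ≤ a ∨ b ≤ x) : deriv (secantCorrection G a b δ) x = 0 := by
  rw [(hasDerivAt_secantCorrection hG).deriv, deriv_plateau_eq_zero hδ hx, plateau_eq_zero hδ hx]
  ring

lemma ExpandingPiece.abs_secantCorrection_le {K : ℝ≥0} (hG : ExpandingPiece G K a b) (hab : a < b)
    (hx : x ∈ Icc a b) : |secantCorrection G a b δ x| ≤ K * (b - a) * (b - a) := by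
  rw [secantCorrection, abs_mul, abs_of_nonneg plateau_nonneg]
  exact (mul_le_of_le_one_left (abs_nonneg _) plateau_le_one).trans (hG.abs_secantInv_sub_le hab hx)

lemma ExpandingPiece.abs_deriv_secantCorrection_le {K : ℝ≥0} (hG : ExpandingPiece G K a b)
    (hab : a < b) (hδ : 0 < δ) {C : ℝ} (hC : ∀ t, |deriv smoothTransition t| ≤ C)
    (hx : x ∈ Icc a b) :
    |deriv (secantCorrection G a b δ) x| ≤ 2 * C / δ * (K * (b - a) * (b - a)) + K * (b - a) := by
  rw [(hasDerivAt_secantCorrection (hG.differentiable x)).deriv]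
  refine (abs_add_le _ _).trans (add_le_add ?_ ?_) <;> rw [abs_mul]
  · have hφ' : |deriv (plateau a b δ) x| ≤ 2 * C / δ := abs_deriv_plateau_le hδ hC
    exact mul_le_mul hφ' (hG.abs_secantInv_sub_le hab hx) (abs_nonneg _)
      ((abs_nonneg _).trans hφ')
  · rw [abs_of_nonneg plateau_nonneg]
    exact (mul_le_of_le_one_left (abs_nonneg _) plateau_le_one).trans
      (hG.abs_deriv_div_slope_sub_one_le hab hx)

end secantCorrection

lemma rightLim_eq_of_eqOn {g G : ℝ → ℝ} {a b : ℝ} (hab : a < b) (hG : ContinuousAt G a)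
    (hgG : EqOn g G (Ioo a b)) : rightLim g a = G a :=
  rightLim_eq_of_tendsto <| (hG.tendsto.mono_left nhdsWithin_le_nhds).congr' <| by
    filter_upwards [Ioo_mem_nhdsGT hab] with y hy using (hgG hy).symm

lemma leftLim_eq_of_eqOn {g G : ℝ → ℝ} {a b : ℝ} (hab : a < b) (hG : ContinuousAt G b)
    (hgG : EqOn g G (Ioo a b)) : leftLim g b = G b :=
  leftLim_eq_of_tendsto <| (hG.tendsto.mono_left nhdsWithin_le_nhds).congr' <| by
    filter_upwards [Ioo_mem_nhdsLT hab] with y hy using (hgG hy).symm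

lemma ExpandingPiece.interp_secantInv_eq {G g L : ℝ → ℝ} {K : ℝ≥0} {a b x : ℝ}
    (hG : ExpandingPiece G K a b) (hab : a < b) (hK : K * (b - a) < 1) (hgG : EqOn g G (Ioo a b))
    (hL : ∀ y ∈ Ico a b, L y = ((b - y) * rightLim g a + (y - a) * leftLim g b) / (b - a))
    (hx : x ∈ Ioo a b) : L (secantInv G a b x) = g x := by
  have hGc := hG.contDiff.continuous
  rw [hL _ (hG.secantInv_mem_Ico hab hK hx), rightLim_eq_of_eqOn hab hGc.continuousAt hgG,
    leftLim_eq_of_eqOn hab hGc.continuousAt hgG, interp_secantInv (hG.slope_ne_zero hab), hgG hx]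

structure IsMesh (w : ℕ → ℝ) (M : ℕ) : Prop where
  zero : w 0 = 0
  last : w (M + 1) = 1
  lt_succ : ∀ j ≤ M, w j < w (j + 1)

namespace IsMesh

variable {w : ℕ → ℝ} {M : ℕ}

lemma strictMonoOn (hw : IsMesh w M) : StrictMonoOn w (Iic (M + 1)) :=
  strictMonoOn_Iic_of_lt_succ fun m hm => by
    rw [Order.succ_eq_add_one]; exact hw.lt_succ m (by omega)

lemma le_of_le (hw : IsMesh w M) {i j : ℕ} (hij : i ≤ j) (hj : j ≤ M + 1) : w i ≤ w j :=
  (hw.strictMonoOn.le_iff_le (mem_Iic.2 (hij.trans hj)) (mem_Iic.2 hj)).2 hij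

lemma mem_Icc (hw : IsMesh w M) {j : ℕ} (hj : j ≤ M + 1) : w j ∈ Icc 0 1 :=
  ⟨hw.zero ▸ hw.le_of_le (Nat.zero_le j) hj, hw.last ▸ hw.le_of_le hj le_rfl⟩

lemma exists_mem_Icc (hw : IsMesh w M) {x : ℝ} (hx : x ∈ Icc 0 1) :
    ∃ k ≤ M, x ∈ Icc (w k) (w (k + 1)) := by
  classical
  set k := Nat.findGreatest (fun j => w j ≤ x) M
  refine ⟨k, Nat.findGreatest_le M,
    Nat.findGreatest_spec (P := fun j => w j ≤ x) (Nat.zero_le M) (hw.zero.symm ▸ hx.1), ?_⟩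
  rcases (Nat.findGreatest_le M : k ≤ M).lt_or_eq with hk | hk
  · exact (not_le.1 (Nat.findGreatest_is_greatest (P := fun j => w j ≤ x) k.lt_succ_self hk)).le
  · rw [show k = M from hk, hw.last]; exact hx.2

lemma le_or_le_of_mem_Icc (hw : IsMesh w M) {j k : ℕ} (hj : j ≤ M) (hk : k ≤ M) (hjk : j ≠ k)
    {x : ℝ} (hx : x ∈ Icc (w k) (w (k + 1))) : x ≤ w j ∨ w (j + 1) ≤ x := by
  rcases hjk.lt_or_gt with h | h
  · exact .inr ((hw.le_of_le h (by omega)).trans hx.1)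
  · exact .inl (hx.2.trans (hw.le_of_le h (by omega)))

lemma sum_eq_of_mem_Icc (hw : IsMesh w M) {f : ℕ → ℝ} {k : ℕ} (hk : k ≤ M) {x : ℝ}
    (hx : x ∈ Icc (w k) (w (k + 1))) (hf : ∀ j ≤ M, x ≤ w j ∨ w (j + 1) ≤ x → f j = 0) :
    ∑ j ∈ Finset.range (M + 1), f j = f k :=
  Finset.sum_eq_single_of_mem k (Finset.mem_range.2 (by omega)) fun j hj hjk =>
    have hj := Nat.lt_succ_iff.1 (Finset.mem_range.1 hj)
    hf j hj (hw.le_or_le_of_mem_Icc hj hk hjk hx)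

lemma sum_sub (hw : IsMesh w M) : ∑ k ∈ Finset.range (M + 1), (w (k + 1) - w k) = 1 := by
  rw [Finset.sum_range_sub, hw.last, hw.zero, sub_zero]

lemma exists_piece (hw : IsMesh w M) {z : ℕ → ℝ} {n k : ℕ} (hk : k ≤ M) (hz0 : z 0 = 0)
    (hzn : z (n + 1) = 1) (href : ∀ i ≤ n + 1, ∃ j ≤ M + 1, w j = z i) :
    ∃ i ≤ n, z i ≤ w k ∧ w (k + 1) ≤ z (i + 1) := by
  classical
  set i := Nat.findGreatest (fun i => z i ≤ w k) n
  refine ⟨i, Nat.findGreatest_le n,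
    Nat.findGreatest_spec (P := fun i => z i ≤ w k) (Nat.zero_le n)
      (hz0.symm ▸ (hw.mem_Icc (j := k) (by omega)).1), ?_⟩
  rcases (Nat.findGreatest_le n : i ≤ n).lt_or_eq with hi | hi
  · have hlt : w k < z (i + 1) :=
      not_le.1 (Nat.findGreatest_is_greatest (P := fun i => z i ≤ w k) i.lt_succ_self hi)
    obtain ⟨j, hj, hwj⟩ := href (i + 1) (by omega)
    rw [← hwj] at hlt ⊢
    have hkj : k < j := (hw.strictMonoOn.lt_iff_lt (mem_Iic.2 (by omega)) (mem_Iic.2 hj)).1 hlt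
    exact hw.le_of_le hkj hj
  · rw [show i = n from hi, hzn, ← hw.last]; exact hw.le_of_le (by omega) le_rfl

end IsMesh

def trimmedCells (w : ℕ → ℝ) (M : ℕ) (t : ℝ) : Set ℝ :=
  ⋃ k ∈ Finset.range (M + 1), Icc (w k + t * (w (k + 1) - w k)) (w (k + 1) - t * (w (k + 1) - w k))

namespace IsMesh

variable {w : ℕ → ℝ} {M : ℕ} {t : ℝ}

lemma trimmedCells_subset (hw : IsMesh w M) (ht : 0 ≤ t) : trimmedCells w M t ⊆ Icc 0 1 := by
  refine iUnion₂_subset fun k hk => ?_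
  have hk := Nat.lt_succ_iff.1 (Finset.mem_range.1 hk)
  have hδ : 0 ≤ t * (w (k + 1) - w k) := mul_nonneg ht (sub_pos.2 (hw.lt_succ k hk)).le
  exact Icc_subset_Icc (by linarith [(hw.mem_Icc (j := k) (by omega)).1])
    (by linarith [(hw.mem_Icc (j := k + 1) (by omega)).2])

lemma one_sub_two_mul_le_volume_trimmedCells (hw : IsMesh w M) (ht : 0 ≤ t) :
    1 - 2 * t ≤ (volume (trimmedCells w M t)).toReal := by
  set δ : ℕ → ℝ := fun k => t * (w (k + 1) - w k)
  have hδ : ∀ k ∈ Finset.range (M + 1), 0 ≤ δ k := fun k hk =>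
    mul_nonneg ht (sub_pos.2 (hw.lt_succ k (Nat.lt_succ_iff.1 (Finset.mem_range.1 hk)))).le
  set bad := ⋃ k ∈ Finset.range (M + 1), Icc (w k) (w k + δ k) ∪ Icc (w (k + 1) - δ k) (w (k + 1))
  have hcover : Icc 0 1 ⊆ trimmedCells w M t ∪ bad := by
    intro x hx
    obtain ⟨k, hk, hxk⟩ := hw.exists_mem_Icc hx
    have hkr : k ∈ Finset.range (M + 1) := Finset.mem_range.2 (by omega)
    by_cases h1 : x ≤ w k + δ k
    · exact .inr (mem_biUnion hkr (.inl ⟨hxk.1, h1⟩))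
    by_cases h2 : w (k + 1) - δ k ≤ x
    · exact .inr (mem_biUnion hkr (.inr ⟨h2, hxk.2⟩))
    exact .inl (mem_biUnion hkr ⟨(not_le.1 h1).le, (not_le.1 h2).le⟩)
  have hbad : volume bad ≤ ENNReal.ofReal (2 * t) := by
    calc volume bad ≤ ∑ k ∈ Finset.range (M + 1),
          volume (Icc (w k) (w k + δ k) ∪ Icc (w (k + 1) - δ k) (w (k + 1))) :=
          measure_biUnion_finset_le _ _
      _ ≤ ∑ k ∈ Finset.range (M + 1), ENNReal.ofReal (2 * δ k) := by
          refine Finset.sum_le_sum fun k hk => (measure_union_le _ _).trans ?_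
          rw [Real.volume_Icc, Real.volume_Icc, add_sub_cancel_left, sub_sub_cancel,
            ← ENNReal.ofReal_add (hδ k hk) (hδ k hk), two_mul]
      _ = ENNReal.ofReal (2 * t) := by
          rw [← ENNReal.ofReal_sum_of_nonneg fun k hk => by linarith [hδ k hk], ← Finset.mul_sum,
            ← Finset.mul_sum, hw.sum_sub, mul_one]
  have hfin : volume (trimmedCells w M t) ≠ ⊤ :=
    ne_top_of_le_ne_top (by simp) (measure_mono (hw.trimmedCells_subset ht))
  have h1 : (1 : ENNReal) ≤ volume (trimmedCells w M t) + ENNReal.ofReal (2 * t) :=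
    calc (1 : ENNReal) = volume (Icc (0 : ℝ) 1) := by simp
      _ ≤ volume (trimmedCells w M t ∪ bad) := measure_mono hcover
      _ ≤ _ := (measure_union_le _ _).trans (add_le_add_right hbad _)
  have := ENNReal.toReal_mono (ENNReal.add_ne_top.2 ⟨hfin, ENNReal.ofReal_ne_top⟩) h1
  rw [ENNReal.toReal_add hfin ENNReal.ofReal_ne_top, ENNReal.toReal_ofReal (by linarith),
    ENNReal.toReal_one] at this
  linarith

end IsMesh

def meshReparam (M : ℕ) (w : ℕ → ℝ) (G : ℕ → ℝ → ℝ) (t x : ℝ) : ℝ :=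
  x + ∑ k ∈ Finset.range (M + 1),
    secantCorrection (G k) (w k) (w (k + 1)) (t * (w (k + 1) - w k)) x

section meshReparam

variable {M : ℕ} {w : ℕ → ℝ} {G : ℕ → ℝ → ℝ} {K : ℝ≥0} {t x : ℝ}

lemma contDiff_meshReparam (hG : ∀ k ≤ M, ContDiff ℝ 1 (G k)) :
    ContDiff ℝ 1 (meshReparam M w G t) :=
  contDiff_id.add <| ContDiff.sum fun k hk =>
    contDiff_secantCorrection (hG k (Nat.lt_succ_iff.1 (Finset.mem_range.1 hk)))

lemma meshReparam_eq (hw : IsMesh w M) (ht : 0 < t) {k : ℕ} (hk : k ≤ M)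
    (hx : x ∈ Icc (w k) (w (k + 1))) :
    meshReparam M w G t x =
      x + secantCorrection (G k) (w k) (w (k + 1)) (t * (w (k + 1) - w k)) x := by
  rw [meshReparam, hw.sum_eq_of_mem_Icc hk hx fun j hj hxj =>
    secantCorrection_eq_zero (mul_pos ht (sub_pos.2 (hw.lt_succ j hj))) hxj]

lemma deriv_meshReparam (hw : IsMesh w M) (ht : 0 < t) (hG : ∀ k ≤ M, ContDiff ℝ 1 (G k))
    {k : ℕ} (hk : k ≤ M) (hx : x ∈ Icc (w k) (w (k + 1))) :
    deriv (meshReparam M w G t) x =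
      1 + deriv (secantCorrection (G k) (w k) (w (k + 1)) (t * (w (k + 1) - w k))) x := by
  have hderiv : HasDerivAt (meshReparam M w G t) (1 + ∑ j ∈ Finset.range (M + 1),
      deriv (secantCorrection (G j) (w j) (w (j + 1)) (t * (w (j + 1) - w j))) x) x :=
    (hasDerivAt_id x).add <| HasDerivAt.fun_sum fun j hj =>
      ((contDiff_secantCorrection (hG j (Nat.lt_succ_iff.1 (Finset.mem_range.1 hj)))).differentiable
        one_ne_zero x).hasDerivAt
  rw [hderiv.deriv, hw.sum_eq_of_mem_Icc hk hx fun j hj hxj =>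
    deriv_secantCorrection_eq_zero ((hG j hj).differentiable one_ne_zero x)
      (mul_pos ht (sub_pos.2 (hw.lt_succ j hj))) hxj]

lemma meshReparam_eq_secantInv (hw : IsMesh w M) (ht : 0 < t) {k : ℕ} (hk : k ≤ M)
    (hx : x ∈ Icc (w k + t * (w (k + 1) - w k)) (w (k + 1) - t * (w (k + 1) - w k))) :
    meshReparam M w G t x = secantInv (G k) (w k) (w (k + 1)) x := by
  have hδ : 0 < t * (w (k + 1) - w k) := mul_pos ht (sub_pos.2 (hw.lt_succ k hk))
  rw [meshReparam_eq hw ht hk ⟨by linarith [hx.1], by linarith [hx.2]⟩,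
    secantCorrection_eq hδ hx.1 hx.2, add_sub_cancel]

lemma abs_meshReparam_sub_le (hw : IsMesh w M)
    (hG : ∀ k ≤ M, ExpandingPiece (G k) K (w k) (w (k + 1))) (ht : 0 < t) (ht1 : t ≤ 1)
    (hstep : ∀ k ≤ M, w (k + 1) - w k ≤ t ^ 2) (hx : x ∈ Icc 0 1) :
    |meshReparam M w G t x - x| ≤ K * t := by
  obtain ⟨k, hk, hxk⟩ := hw.exists_mem_Icc hx
  have hh := sub_pos.2 (hw.lt_succ k hk)
  rw [meshReparam_eq hw ht hk hxk, add_sub_cancel_left]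
  refine ((hG k hk).abs_secantCorrection_le (hw.lt_succ k hk) hxk).trans ?_
  have hht : w (k + 1) - w k ≤ t := (hstep k hk).trans (by nlinarith)
  rw [mul_assoc]
  exact mul_le_mul_of_nonneg_left (by nlinarith) K.2

lemma abs_deriv_meshReparam_sub_one_le (hw : IsMesh w M)
    (hG : ∀ k ≤ M, ExpandingPiece (G k) K (w k) (w (k + 1))) (ht : 0 < t) (ht1 : t ≤ 1)
    (hstep : ∀ k ≤ M, w (k + 1) - w k ≤ t ^ 2) {C : ℝ}
    (hC : ∀ s, |deriv smoothTransition s| ≤ C) (hx : x ∈ Icc 0 1) :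
    |deriv (meshReparam M w G t) x - 1| ≤ (2 * C + 1) * K * t := by
  obtain ⟨k, hk, hxk⟩ := hw.exists_mem_Icc hx
  set h := w (k + 1) - w k
  have hh : 0 < h := sub_pos.2 (hw.lt_succ k hk)
  have hC0 : 0 ≤ C := (abs_nonneg _).trans (hC 0)
  have hht : h / t ≤ t := by rw [div_le_iff₀ ht]; nlinarith [hstep k hk]
  rw [deriv_meshReparam hw ht (fun j hj => (hG j hj).contDiff) hk hxk, add_sub_cancel_left]
  calc _ ≤ 2 * C / (t * h) * (K * h * h) + K * h :=
        (hG k hk).abs_deriv_secantCorrection_le (hw.lt_succ k hk) (mul_pos ht hh) hC hxk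
    _ = 2 * C * K * (h / t) + K * h := by field_simp
    _ ≤ 2 * C * K * t + K * t := by
        gcongr
        nlinarith [hstep k hk]
    _ = (2 * C + 1) * K * t := by ring

lemma meshReparam_eq_self (hw : IsMesh w M) (ht : 0 < t) (hx : x ≤ 0 ∨ 1 ≤ x) :
    meshReparam M w G t x = x := by
  refine add_eq_left.2 (Finset.sum_eq_zero fun k hk => ?_)
  have hk := Nat.lt_succ_iff.1 (Finset.mem_range.1 hk)
  refine secantCorrection_eq_zero (mul_pos ht (sub_pos.2 (hw.lt_succ k hk))) ?_
  rcases hx with hx | hx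
  · exact .inl (hx.trans (hw.mem_Icc (j := k) (by omega)).1)
  · exact .inr ((hw.mem_Icc (j := k + 1) (by omega)).2.trans hx)

end meshReparam

def IsLinearInterp (L g : ℝ → ℝ) (w : ℕ → ℝ) (M : ℕ) : Prop :=
  ∀ k ≤ M, ∀ y ∈ Ico (w k) (w (k + 1)), L y =
    ((w (k + 1) - y) * rightLim g (w k) + (y - w k) * leftLim g (w (k + 1))) / (w (k + 1) - w k)

lemma IsLinearInterp.comp_meshReparam {L g : ℝ → ℝ} {M : ℕ} {w : ℕ → ℝ} {G : ℕ → ℝ → ℝ}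
    {K : ℝ≥0} {t x : ℝ} (hL : IsLinearInterp L g w M) (hw : IsMesh w M) (ht : 0 < t)
    (hG : ∀ k ≤ M, ExpandingPiece (G k) K (w k) (w (k + 1)) ∧ EqOn g (G k) (Ioo (w k) (w (k + 1))))
    (hK : ∀ k ≤ M, K * (w (k + 1) - w k) < 1) (hx : x ∈ trimmedCells w M t) :
    L (meshReparam M w G t x) = g x := by
  simp only [trimmedCells, mem_iUnion, Finset.mem_range, exists_prop] at hx
  obtain ⟨k, hk, hxk⟩ := hx
  have hk := Nat.lt_succ_iff.1 hk
  have hδ : 0 < t * (w (k + 1) - w k) := mul_pos ht (sub_pos.2 (hw.lt_succ k hk))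
  rw [meshReparam_eq_secantInv hw ht hk hxk]
  exact (hG k hk).1.interp_secantInv_eq (hw.lt_succ k hk) (hK k hk) (hG k hk).2 (hL k hk)
    ⟨by linarith [hxk.1], by linarith [hxk.2]⟩

lemma exists_lipschitzOnWith_deriv {n : ℕ} {G : ℕ → ℝ → ℝ} (hG : ∀ i ≤ n, ContDiff ℝ 2 (G i))
    {s : ℕ → Set ℝ} (hs : ∀ i, IsCompact (s i)) (hs' : ∀ i, Convex ℝ (s i)) :
    ∃ K, ∀ i ≤ n, LipschitzOnWith K (deriv (G i)) (s i) := by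
  have : ∀ i ≤ n, ∃ K, LipschitzOnWith K (deriv (G i)) (s i) := fun i hi =>
    (show ContDiff ℝ (1 + 1) (G i) from hG i hi).deriv'.contDiffOn.exists_lipschitzOnWith
      one_ne_zero (hs' i) (hs i)
  choose! K hK using this
  exact ⟨∑ i ∈ Finset.range (n + 1), K i, fun i hi => (hK i hi).weaken
    (Finset.single_le_sum (fun _ _ => zero_le) (Finset.mem_range.2 (by omega)))⟩

def KellerClose (g g' : ℝ → ℝ) (ε : ℝ) : Prop :=
  ∃ B : Set ℝ, MeasurableSet B ∧ B ⊆ Set.Icc 0 1 ∧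
    (volume B).toReal > 1 - ε ∧
    ∃ d : ℝ → ℝ, ContDiffOn ℝ 1 d (Set.Icc 0 1) ∧ StrictMonoOn d (Set.Icc 0 1) ∧
      d '' Set.Icc 0 1 = Set.Icc 0 1 ∧
      (∀ x ∈ B, g x = g' (d x)) ∧
      (∀ x ∈ Set.Icc (0:ℝ) 1, |d x - x| < ε) ∧
      (∀ x ∈ Set.Icc (0:ℝ) 1, |1 / derivWithin d (Set.Icc 0 1) x - 1| < ε)

lemma kellerDist_le {g g' : ℝ → ℝ} {ε : ℝ} (hε : 0 < ε) (h : KellerClose g g' ε) :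
    kellerDist g g' ≤ ε :=
  csInf_le ⟨0, fun _ hε' => hε'.1.le⟩ ⟨hε, h⟩

lemma abs_one_div_sub_one_le {y ε : ℝ} (hy : |y - 1| ≤ ε) (hε : ε ≤ 1 / 2) :
    |1 / y - 1| ≤ 2 * ε := by
  have hy0 : 1 / 2 ≤ y := by linarith [(abs_le.1 hy).1]
  rw [div_sub_one (by linarith), abs_div, abs_sub_comm, abs_of_pos (a := y) (by linarith),
    div_le_iff₀ (by linarith)]
  nlinarith [abs_nonneg (y - 1)]

theorem exists_kellerClose_of_isLinearInterp (K : ℝ≥0) :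
    ∃ c > (0 : ℝ), ∃ t₀ > (0 : ℝ), ∀ t, 0 < t → t ≤ t₀ →
      ∀ (M : ℕ) (w : ℕ → ℝ), IsMesh w M → (∀ k ≤ M, w (k + 1) - w k ≤ t ^ 2) →
      ∀ (g L : ℝ → ℝ) (G : ℕ → ℝ → ℝ),
        (∀ k ≤ M, ExpandingPiece (G k) K (w k) (w (k + 1)) ∧ EqOn g (G k) (Ioo (w k) (w (k + 1)))) →
        IsLinearInterp L g w M → KellerClose g L (c * t) := by
  obtain ⟨C, hC⟩ := exists_abs_deriv_smoothTransition_le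
  have hC0 : 0 ≤ C := (abs_nonneg _).trans (hC 0)
  set E : ℝ := (2 * C + 1) * K
  have hKE : (K : ℝ) ≤ E := le_mul_of_one_le_left K.2 (by linarith)
  -- `c` beats the bounds `2 E t` on `|1 / d' - 1|`, `K t` on `|d - id|` and `2 t` on the measure
  -- of the complement of the good set; `t₀` keeps `E t ≤ 1 / 2`.
  refine ⟨2 * E + K + 3, by positivity, 1 / (2 * E + 2), by positivity, ?_⟩
  intro t ht ht₀ M w hw hstep g L G hG hL
  rw [le_div_iff₀ (by positivity)] at ht₀
  have hEt : E * t ≤ 1 / 2 := by nlinarith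
  have ht1 : t ≤ 1 := by nlinarith
  set d := meshReparam M w G t
  have hd : ContDiff ℝ 1 d := contDiff_meshReparam fun k hk => (hG k hk).1.contDiff
  have hd' : ∀ x ∈ Icc (0 : ℝ) 1, |deriv d x - 1| ≤ E * t := fun x hx =>
    abs_deriv_meshReparam_sub_one_le hw (fun k hk => (hG k hk).1) ht ht1 hstep hC hx
  have hmono : StrictMonoOn d (Icc 0 1) :=
    strictMonoOn_of_deriv_pos (convex_Icc 0 1) hd.continuous.continuousOn fun x hx => by
      linarith [(abs_le.1 (hd' x (interior_subset hx))).1]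
  have hEt0 : 0 ≤ E * t := mul_nonneg (K.2.trans hKE) ht.le
  have hKt0 : 0 ≤ K * t := mul_nonneg K.2 ht.le
  have hK : ∀ k ≤ M, K * (w (k + 1) - w k) < 1 := fun k hk => by
    nlinarith [hstep k hk, hw.lt_succ k hk, K.2]
  refine ⟨trimmedCells w M t,
    Finset.measurableSet_biUnion _ fun _ _ => measurableSet_Icc, hw.trimmedCells_subset ht.le,
    by linarith [hw.one_sub_two_mul_le_volume_trimmedCells ht.le], d, hd.contDiffOn, hmono,
    ?_, fun x hx => (hL.comp_meshReparam hw ht hG hK hx).symm, fun x hx => ?_, fun x hx => ?_⟩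
  · rw [hd.continuous.continuousOn.image_Icc_of_monotoneOn zero_le_one hmono.monotoneOn,
      show d 0 = 0 from meshReparam_eq_self hw ht (.inl le_rfl),
      show d 1 = 1 from meshReparam_eq_self hw ht (.inr le_rfl)]
  · linarith [abs_meshReparam_sub_le hw (fun k hk => (hG k hk).1) ht ht1 hstep hx]
  · rw [(hd.differentiable one_ne_zero x).derivWithin (uniqueDiffOn_Icc zero_lt_one x hx)]
    linarith [abs_one_div_sub_one_le (hd' x hx) hEt]

theorem linear_spline_keller_distance_general
    (g : ℝ → ℝ) (η : ℝ) (hη : 1 < η) (nz : ℕ) (z : ℕ → ℝ)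
    (hz0 : z 0 = 0) (hzlast : z (nz + 1) = 1)
    -- g is piecewise C² w.r.t. the mesh z, uniformly expanding with |g'| ≥ η on each piece
    (hgC2 : ∀ i ≤ nz, ∃ G : ℝ → ℝ, ContDiff ℝ 2 G ∧
      Set.EqOn g G (Set.Ioo (z i) (z (i + 1))) ∧
      ∀ x ∈ Set.Ioo (z i) (z (i + 1)), η ≤ |deriv G x|) :
    ∃ c > (0:ℝ), ∃ θ₀ > (0:ℝ), ∀ θ : ℝ, 0 < θ → θ ≤ θ₀ →
      ∀ (M : ℕ) (w : ℕ → ℝ),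
        -- w is a refinement of the mesh z, with maximal step ≤ θ
        w 0 = 0 → w (M + 1) = 1 →
        (∀ j ≤ M, w j < w (j + 1)) →
        (∀ j ≤ M, w (j + 1) - w j ≤ θ) →
        (∀ i ≤ nz + 1, ∃ j ≤ M + 1, w j = z i) →
        -- 𝔏 is the piecewise linear interpolant of g on the mesh w
        ∀ 𝔏 : ℝ → ℝ,
          (∀ j ≤ M, ∀ x ∈ Set.Ico (w j) (w (j + 1)),
            𝔏 x = ((w (j + 1) - x) * Function.rightLim g (w j) +
                    (x - w j) * Function.leftLim g (w (j + 1))) / (w (j + 1) - w j)) →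
          𝔏 1 = Function.leftLim g 1 →
          ∃ B : Set ℝ, MeasurableSet B ∧ B ⊆ Set.Icc 0 1 ∧
            (volume B).toReal > 1 - c * Real.sqrt θ ∧
            ∃ d : ℝ → ℝ, ContDiffOn ℝ 1 d (Set.Icc 0 1) ∧
              StrictMonoOn d (Set.Icc 0 1) ∧
              d '' Set.Icc 0 1 = Set.Icc 0 1 ∧
              (∀ x ∈ B, g x = 𝔏 (d x)) ∧
              (∀ x ∈ Set.Icc (0:ℝ) 1, |d x - x| < c * Real.sqrt θ) ∧
              (∀ x ∈ Set.Icc (0:ℝ) 1,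
                |1 / derivWithin d (Set.Icc 0 1) x - 1| < c * Real.sqrt θ) ∧
              kellerDist g 𝔏 ≤ c * Real.sqrt θ := by
  choose! G hGC2 hgG hGη using hgC2
  obtain ⟨K, hK⟩ := exists_lipschitzOnWith_deriv hGC2 (s := fun i => Icc (z i) (z (i + 1)))
    (fun _ => isCompact_Icc) (fun _ => convex_Icc _ _)
  have hpiece : ∀ i ≤ nz, ExpandingPiece (G i) K (z i) (z (i + 1)) := fun i hi =>
    ⟨(hGC2 i hi).of_le (by norm_num), fun x hx => hη.le.trans (hGη i hi x hx), hK i hi⟩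
  obtain ⟨c, hc, t₀, ht₀, hclose⟩ := exists_kellerClose_of_isLinearInterp K
  refine ⟨c, hc, t₀ ^ 2, by positivity, fun θ hθ hθ₀ M w hw0 hw1 hwm hstep href 𝔏 h𝔏 _ => ?_⟩
  have hw : IsMesh w M := ⟨hw0, hw1, hwm⟩
  choose! I hI hzI hIz using fun k (hk : k ≤ M) => hw.exists_piece hk hz0 hzlast href
  have hθclose : KellerClose g 𝔏 (c * √θ) := hclose √θ (Real.sqrt_pos.2 hθ)
    ((Real.sqrt_le_left ht₀.le).2 hθ₀) M w hw
    (fun k hk => by rw [Real.sq_sqrt hθ.le]; exact hstep k hk) g 𝔏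
    (fun k => G (I k)) (fun k hk => ⟨(hpiece (I k) (hI k hk)).mono (hzI k hk) (hIz k hk),
      (hgG (I k) (hI k hk)).mono (Ioo_subset_Ioo (hzI k hk) (hIz k hk))⟩) h𝔏
  have hdist := kellerDist_le (mul_pos hc (Real.sqrt_pos.2 hθ)) hθclose
  obtain ⟨B, hB, hB01, hvol, d, hd, hmono, himage, hconj, hdisp, hinv⟩ := hθclose
  exact ⟨B, hB, hB01, hvol, d, hd, hmono, himage, hconj, hdisp, hinv, hdist⟩

/--
the linear spline interpolant `𝔏_θ` of a piecewise `C²` uniformly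
expanding map `g` of `[0,1]` on a mesh of maximal step `θ` is close to `g` in
Keller's distance: there are `c > 0` and a set `B_θ` with `m(B_θ) > 1 − c√θ` and a
`C¹` diffeomorphism `d_θ` of `[0,1]` with `g = 𝔏_θ ∘ d_θ` on `B_θ`,
`|d_θ(x) − x| < c√θ` and `|1/d_θ'(x) − 1| < c√θ`; in particular
`𝔡(g, 𝔏_θ) ≤ c√θ`.
-/
theorem linear_spline_keller_distance
    (g : ℝ → ℝ) (η : ℝ) (hη : 1 < η) (nz : ℕ) (z : ℕ → ℝ)
    (hz0 : z 0 = 0) (hzlast : z (nz + 1) = 1)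
    (hz_mono : ∀ i ≤ nz, z i < z (i + 1))
    -- g is piecewise C² w.r.t. the mesh z, uniformly expanding with |g'| ≥ η on each piece
    (hgC2 : ∀ i ≤ nz, ∃ G : ℝ → ℝ, ContDiff ℝ 2 G ∧
      Set.EqOn g G (Set.Ioo (z i) (z (i + 1))) ∧
      ∀ x ∈ Set.Ioo (z i) (z (i + 1)), η ≤ |deriv G x|)
    (hg_maps : Set.MapsTo g (Set.Icc 0 1) (Set.Icc 0 1)) :
    ∃ c > (0:ℝ), ∃ θ₀ > (0:ℝ), ∀ θ : ℝ, 0 < θ → θ ≤ θ₀ →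
      ∀ (M : ℕ) (w : ℕ → ℝ),
        -- w is a refinement of the mesh z, with maximal step ≤ θ
        w 0 = 0 → w (M + 1) = 1 →
        (∀ j ≤ M, w j < w (j + 1)) →
        (∀ j ≤ M, w (j + 1) - w j ≤ θ) →
        (∀ i ≤ nz + 1, ∃ j ≤ M + 1, w j = z i) →
        -- 𝔏 is the piecewise linear interpolant of g on the mesh w
        ∀ 𝔏 : ℝ → ℝ,
          (∀ j ≤ M, ∀ x ∈ Set.Ico (w j) (w (j + 1)),
            𝔏 x = ((w (j + 1) - x) * Function.rightLim g (w j) +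
                    (x - w j) * Function.leftLim g (w (j + 1))) / (w (j + 1) - w j)) →
          𝔏 1 = Function.leftLim g 1 →
          ∃ B : Set ℝ, MeasurableSet B ∧ B ⊆ Set.Icc 0 1 ∧
            (volume B).toReal > 1 - c * Real.sqrt θ ∧
            ∃ d : ℝ → ℝ, ContDiffOn ℝ 1 d (Set.Icc 0 1) ∧
              StrictMonoOn d (Set.Icc 0 1) ∧
              d '' Set.Icc 0 1 = Set.Icc 0 1 ∧
              (∀ x ∈ B, g x = 𝔏 (d x)) ∧
              (∀ x ∈ Set.Icc (0:ℝ) 1, |d x - x| < c * Real.sqrt θ) ∧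
              (∀ x ∈ Set.Icc (0:ℝ) 1,
                |1 / derivWithin d (Set.Icc 0 1) x - 1| < c * Real.sqrt θ) ∧
              kellerDist g 𝔏 ≤ c * Real.sqrt θ :=
  linear_spline_keller_distance_general g η hη nz z hz0 hzlast hgC2

end Stmt14
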